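/- arXiv:2107.09057 — 2 statements merged into one kernel-verified Lean document; each statement's English description precedes it below -/
import Mathlib

section
/- Quantum L¹ smooth support uncertainty principle, commutative finite-dimensional case: if k > 0 and F is a k-transform, then for every nonzero x : Fin n → ℂ and all ε, η ∈ [0,1], S_ε^{1,d}(x) * S_η^{1,τ}(F x) ≥ k * (1 − ε) * (1 − η). -/
open Finset

/-- Weighted `p`-norm on `Fin n → ℂ` with weight `d`. -/
noncomputable def wnorm {n : ℕ} (d : Fin n → ℝ) (p : ℝ) (x : Fin n → ℂ) : ℝ :=
  (∑ i, d i * ‖x i‖ ^ p) ^ (1 / p)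

/-- Sup (infinity) norm on `Fin n → ℂ`. -/
noncomputable def inorm {n : ℕ} (x : Fin n → ℂ) : ℝ :=
  ⨆ i, ‖x i‖

/-- `G` is the adjoint of `F` with respect to the weighted inner products with
weights `d` and `τ`. -/
def IsAdjointPair {n m : ℕ} (d : Fin n → ℝ) (τ : Fin m → ℝ)
    (F : (Fin n → ℂ) →ₗ[ℂ] (Fin m → ℂ)) (G : (Fin m → ℂ) →ₗ[ℂ] (Fin n → ℂ)) : Prop :=
  ∀ (x : Fin n → ℂ) (u : Fin m → ℂ),
    ∑ j, (τ j : ℂ) * (starRingEnd ℂ) (F x j) * u j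
      = ∑ i, (d i : ℂ) * (starRingEnd ℂ) (x i) * G u i

/-- The `(p, ε)` smooth support of `x` with respect to the weight `d`. -/
noncomputable def smoothSupp {n : ℕ} (d : Fin n → ℝ) (p ε : ℝ) (x : Fin n → ℂ) : ℝ :=
  sInf { s : ℝ | ∃ h : Fin n → ℝ, (∀ i, 0 ≤ h i) ∧ (∀ i, h i ≤ 1) ∧
    wnorm d p (fun i => ((1 - h i : ℝ) : ℂ) * x i) ≤ ε * wnorm d p x ∧
    s = ∑ i, if x i = 0 then 0 else d i * h i }

/-!
Testing the `L¹ → L∞` bound of `F` against the point masses `Pi.single i 1` and using the adjoint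
relation shows that `F*` is also an `L¹ → L∞` contraction. If `h` witnesses the smooth support of
`x` at level `ε`, splitting `x = h x + (1 - h) x` gives `(1 - ε) ‖x‖₁ ≤ S_ε(x) ‖x‖∞`, and the same
holds for `F x`. Chaining
`k (1-ε)(1-η) ‖x‖∞ ≤ (1-ε)(1-η) ‖F x‖₁ ≤ (1-ε) S_η(F x) ‖F x‖∞ ≤ (1-ε) S_η(F x) ‖x‖₁
  ≤ S_ε(x) S_η(F x) ‖x‖∞`
and cancelling `‖x‖∞ > 0` proves the theorem.
-/

section Norms

variable {n : ℕ}

lemma wnorm_one_eq (d : Fin n → ℝ) (x : Fin n → ℂ) : wnorm d 1 x = ∑ i, d i * ‖x i‖ := by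
  simp [wnorm]

lemma wnorm_one_nonneg {d : Fin n → ℝ} (hd : ∀ i, 0 ≤ d i) (x : Fin n → ℂ) :
    0 ≤ wnorm d 1 x := by
  rw [wnorm_one_eq]
  exact sum_nonneg fun i _ => mul_nonneg (hd i) (norm_nonneg _)

lemma wnorm_one_single (d : Fin n → ℝ) (i : Fin n) : wnorm d 1 (Pi.single i 1) = d i := by
  rw [wnorm_one_eq, Fintype.sum_eq_single i fun j hj => by simp [Pi.single_eq_of_ne hj]]
  simp

lemma norm_le_inorm (x : Fin n → ℂ) (i : Fin n) : ‖x i‖ ≤ inorm x :=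
  le_ciSup (f := fun j => ‖x j‖) (Set.finite_range _).bddAbove i

lemma inorm_nonneg (x : Fin n → ℂ) : 0 ≤ inorm x :=
  Real.iSup_nonneg fun i => norm_nonneg (x i)

lemma inorm_le {x : Fin n → ℂ} {c : ℝ} (h : ∀ i, ‖x i‖ ≤ c) (hc : 0 ≤ c) : inorm x ≤ c :=
  Real.iSup_le h hc

lemma inorm_pos {x : Fin n → ℂ} (hx : x ≠ 0) : 0 < inorm x := by
  obtain ⟨i, hi⟩ := Function.ne_iff.mp hx
  exact (norm_pos_iff.mpr hi).trans_le (norm_le_inorm x i)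

end Norms

namespace IsAdjointPair

variable {n m : ℕ} {d : Fin n → ℝ} {τ : Fin m → ℝ}
  {F : (Fin n → ℂ) →ₗ[ℂ] (Fin m → ℂ)} {G : (Fin m → ℂ) →ₗ[ℂ] (Fin n → ℂ)}

lemma mul_apply_eq (hadj : IsAdjointPair d τ F G) (u : Fin m → ℂ) (i : Fin n) :
    (d i : ℂ) * G u i = ∑ j, (τ j : ℂ) * (starRingEnd ℂ) (F (Pi.single i 1) j) * u j := by
  rw [hadj, Fintype.sum_eq_single i fun j hj => by simp [Pi.single_eq_of_ne hj]]
  simp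

lemma inorm_le_wnorm_one (hadj : IsAdjointPair d τ F G) (hd : ∀ i, 0 < d i)
    (hτ : ∀ j, 0 ≤ τ j) (hF1 : ∀ x, inorm (F x) ≤ wnorm d 1 x) (u : Fin m → ℂ) :
    inorm (G u) ≤ wnorm τ 1 u := by
  refine inorm_le (fun i => ?_) (wnorm_one_nonneg hτ u)
  have hFe (j : Fin m) : ‖F (Pi.single i 1) j‖ ≤ d i :=
    (norm_le_inorm _ j).trans ((hF1 _).trans (wnorm_one_single d i).le)
  refine le_of_mul_le_mul_left ?_ (hd i)
  calc d i * ‖G u i‖ = ‖(d i : ℂ) * G u i‖ := by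
        rw [norm_mul, Complex.norm_of_nonneg (hd i).le]
    _ ≤ ∑ j, τ j * ‖F (Pi.single i 1) j‖ * ‖u j‖ := by
        rw [mul_apply_eq hadj]
        refine (norm_sum_le _ _).trans_eq (sum_congr rfl fun j _ => ?_)
        rw [norm_mul, norm_mul, Complex.norm_of_nonneg (hτ j), Complex.norm_conj]
    _ ≤ ∑ j, τ j * d i * ‖u j‖ := by
        gcongr with j
        · exact hτ j
        · exact hFe j
    _ = d i * wnorm τ 1 u := by
        rw [wnorm_one_eq, mul_sum]
        exact sum_congr rfl fun j _ => by ring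

end IsAdjointPair

section SmoothSupport

variable {n : ℕ} {d : Fin n → ℝ}

lemma smoothSupp_nonneg (hd : ∀ i, 0 ≤ d i) (p ε : ℝ) (x : Fin n → ℂ) :
    0 ≤ smoothSupp d p ε x := by
  refine Real.sInf_nonneg ?_
  rintro _ ⟨h, hh0, -, -, rfl⟩
  refine sum_nonneg fun i _ => ?_
  split_ifs
  exacts [le_rfl, mul_nonneg (hd i) (hh0 i)]

lemma one_sub_mul_wnorm_one_le_of_admissible (hd : ∀ i, 0 ≤ d i) {ε : ℝ} {x : Fin n → ℂ}
    {h : Fin n → ℝ} (hh0 : ∀ i, 0 ≤ h i) (hh1 : ∀ i, h i ≤ 1)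
    (hcond : wnorm d 1 (fun i => ((1 - h i : ℝ) : ℂ) * x i) ≤ ε * wnorm d 1 x) :
    (1 - ε) * wnorm d 1 x ≤ (∑ i, if x i = 0 then 0 else d i * h i) * inorm x := by
  have hrest : wnorm d 1 (fun i => ((1 - h i : ℝ) : ℂ) * x i)
      = ∑ i, d i * (1 - h i) * ‖x i‖ := by
    rw [wnorm_one_eq]
    refine sum_congr rfl fun i _ => ?_
    rw [norm_mul, Complex.norm_of_nonneg (sub_nonneg.mpr (hh1 i)), mul_assoc]
  have hsplit : wnorm d 1 x
      = ∑ i, d i * h i * ‖x i‖ + wnorm d 1 (fun i => ((1 - h i : ℝ) : ℂ) * x i) := by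
    rw [hrest, wnorm_one_eq, ← sum_add_distrib]
    exact sum_congr rfl fun i _ => by ring
  have hmain : ∑ i, d i * h i * ‖x i‖
      ≤ (∑ i, if x i = 0 then 0 else d i * h i) * inorm x := by
    rw [sum_mul]
    refine sum_le_sum fun i _ => ?_
    split_ifs with hxi
    · simp [hxi]
    · exact mul_le_mul_of_nonneg_left (norm_le_inorm x i) (mul_nonneg (hd i) (hh0 i))
  linarith

lemma one_sub_mul_wnorm_one_le_smoothSupp_mul_inorm (hd : ∀ i, 0 ≤ d i) {ε : ℝ} (hε : 0 ≤ ε)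
    (x : Fin n → ℂ) : (1 - ε) * wnorm d 1 x ≤ smoothSupp d 1 ε x * inorm x := by
  have hne : { s : ℝ | ∃ h : Fin n → ℝ, (∀ i, 0 ≤ h i) ∧ (∀ i, h i ≤ 1) ∧
      wnorm d 1 (fun i => ((1 - h i : ℝ) : ℂ) * x i) ≤ ε * wnorm d 1 x ∧
      s = ∑ i, if x i = 0 then 0 else d i * h i }.Nonempty := by
    refine ⟨_, fun _ => 1, fun _ => zero_le_one, fun _ => le_rfl, ?_, rfl⟩
    simpa [wnorm_one_eq] using mul_nonneg hε (wnorm_one_nonneg hd x)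
  rw [smoothSupp, mul_comm _ (inorm x), ← smul_eq_mul (inorm x), ← Real.sInf_smul_of_nonneg (inorm_nonneg x)]
  refine le_csInf (hne.smul_set) ?_
  rintro _ ⟨_, ⟨h, hh0, hh1, hcond, rfl⟩, rfl⟩
  exact (one_sub_mul_wnorm_one_le_of_admissible hd hh0 hh1 hcond).trans_eq (mul_comm _ _)

end SmoothSupport

theorem quantum_L1_smooth_support_uncertainty_general {n m : ℕ}
    (d : Fin n → ℝ) (τ : Fin m → ℝ) (hd : ∀ i, 0 < d i) (hτ : ∀ j, 0 < τ j)
    (k : ℝ)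
    (F : (Fin n → ℂ) →ₗ[ℂ] (Fin m → ℂ)) (G : (Fin m → ℂ) →ₗ[ℂ] (Fin n → ℂ))
    (hadj : IsAdjointPair d τ F G)
    (hF1 : ∀ x, inorm (F x) ≤ wnorm d 1 x)
    (hFk : ∀ x, k * inorm x ≤ inorm (G (F x)))
    (x : Fin n → ℂ) (hx : x ≠ 0)
    (ε η : ℝ) (hε : ε ∈ Set.Icc (0:ℝ) 1) (hη : η ∈ Set.Icc (0:ℝ) 1) :
    smoothSupp d 1 ε x * smoothSupp τ 1 η (F x) ≥ k * (1 - ε) * (1 - η) := by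
  obtain ⟨hε0, hε1⟩ := hε
  obtain ⟨hη0, hη1⟩ := hη
  have hε1' : 0 ≤ 1 - ε := sub_nonneg.mpr hε1
  have hη1' : 0 ≤ 1 - η := sub_nonneg.mpr hη1
  have hd' (i : Fin n) : 0 ≤ d i := (hd i).le
  have hτ' (j : Fin m) : 0 ≤ τ j := (hτ j).le
  have hSFx := smoothSupp_nonneg hτ' 1 η (F x)
  have hx_supp := one_sub_mul_wnorm_one_le_smoothSupp_mul_inorm hd' hε0 x
  have hFx_supp := one_sub_mul_wnorm_one_le_smoothSupp_mul_inorm hτ' hη0 (F x)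
  have hGFx := (hFk x).trans (hadj.inorm_le_wnorm_one hd hτ' hF1 (F x))
  refine le_of_mul_le_mul_right ?_ (inorm_pos hx)
  calc k * (1 - ε) * (1 - η) * inorm x = (1 - ε) * ((1 - η) * (k * inorm x)) := by ring
    _ ≤ (1 - ε) * ((1 - η) * wnorm τ 1 (F x)) := by gcongr
    _ ≤ (1 - ε) * (smoothSupp τ 1 η (F x) * inorm (F x)) := by gcongr
    _ ≤ (1 - ε) * (smoothSupp τ 1 η (F x) * wnorm d 1 x) := by gcongr; exact hF1 x
    _ = smoothSupp τ 1 η (F x) * ((1 - ε) * wnorm d 1 x) := by ring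
    _ ≤ smoothSupp τ 1 η (F x) * (smoothSupp d 1 ε x * inorm x) := by gcongr
    _ = smoothSupp d 1 ε x * smoothSupp τ 1 η (F x) * inorm x := by ring

/-- Quantum L¹ smooth support uncertainty principle, commutative finite-dimensional case. -/
theorem quantum_L1_smooth_support_uncertainty {n m : ℕ} (hn : 0 < n) (hm : 0 < m)
    (d : Fin n → ℝ) (τ : Fin m → ℝ) (hd : ∀ i, 0 < d i) (hτ : ∀ j, 0 < τ j)
    (k : ℝ) (hk : 0 < k)
    (F : (Fin n → ℂ) →ₗ[ℂ] (Fin m → ℂ)) (G : (Fin m → ℂ) →ₗ[ℂ] (Fin n → ℂ))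
    (hadj : IsAdjointPair d τ F G)
    (hF1 : ∀ x, inorm (F x) ≤ wnorm d 1 x)
    (hFk : ∀ x, k * inorm x ≤ inorm (G (F x)))
    (x : Fin n → ℂ) (hx : x ≠ 0)
    (ε η : ℝ) (hε : ε ∈ Set.Icc (0:ℝ) 1) (hη : η ∈ Set.Icc (0:ℝ) 1) :
    smoothSupp d 1 ε x * smoothSupp τ 1 η (F x) ≥ k * (1 - ε) * (1 - η) :=
  quantum_L1_smooth_support_uncertainty_general d τ hd hτ k F G hadj hF1 hFk x hx ε η hε hη
end

section
/- Quantum Hirschman-Beckner uncertainty principle, commutative finite-dimensional case: if k > 0, F is a k-transform, and F* ∘ F = k • id, then for every nonzero x : Fin n → ℂ, H_d(|x|²)/‖x‖_{2,d}² + H_τ(|F x|²)/‖F x‖_{2,τ}² ≥ −log(‖x‖_{2,d}²) − log(‖F x‖_{2,τ}²) + log k. -/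
/-!
Riesz–Thorin interpolation between `‖F x‖_∞ ≤ ‖x‖_{1,d}` and Parseval's identity
`‖F x‖_{2,τ}² = k ‖x‖_{2,d}²` (from `F* F = k`) gives the Hausdorff–Young inequality
`‖F x‖_{2/t,τ} ≤ k^{t/2} ‖x‖_{2/(2-t),d}` for `0 < t ≤ 1`; the interpolation is Hadamard's
three-lines theorem applied to `z ↦ ⟨F X(z), Y(z)⟩_τ` for analytic families of vectors through
`x` and a dual vector of `F x`. At `t = 1` the inequality is an equality, so its logarithm can be
differentiated at `t = 1` from the left, and the derivatives of `t ↦ ∑ d |x|^{2/(2-t)}` and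
`t ↦ ∑ τ |F x|^{2/t}` there are, up to sign, the two entropies.
-/

open Finset

/-- Von Neumann entropy of `|x|²` with respect to the weight `d`
(the convention `0 * log 0 = 0` holds since `Real.log 0 = 0`). -/
noncomputable def went {n : ℕ} (d : Fin n → ℝ) (x : Fin n → ℂ) : ℝ :=
  -∑ i, d i * ‖x i‖ ^ 2 * Real.log (‖x i‖ ^ 2)

open Complex.HadamardThreeLines

theorem HasDerivAt.nonneg_of_forall_mem_Ioo_le {f : ℝ → ℝ} {f' a b : ℝ} (hab : a < b)
    (hle : ∀ t ∈ Set.Ioo a b, f t ≤ f b) (hf : HasDerivAt f f' b) : 0 ≤ f' := by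
  have hmax : IsLocalMaxOn f (Set.Ioc a b) b :=
    IsMaxOn.localize <| isMaxOn_iff.mpr fun t ht =>
      (eq_or_lt_of_le ht.2).elim (fun h => h ▸ le_rfl) fun h => hle t ⟨ht.1, h⟩
  have hcone : (a - b) / 2 ∈ posTangentConeAt (Set.Ioc a b) b := by
    refine mem_posTangentConeAt_of_segment_subset ?_
    rw [segment_symm, segment_eq_Icc (by linarith)]
    exact Set.Icc_subset_Ioc (by linarith) le_rfl
  have h := hmax.hasFDerivWithinAt_nonpos hf.hasDerivWithinAt.hasFDerivWithinAt hcone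
  rw [ContinuousLinearMap.toSpanSingleton_apply, smul_eq_mul] at h
  nlinarith

theorem HasDerivAt.const_rpow_of_nonneg {f : ℝ → ℝ} {f' x a : ℝ} (ha : 0 ≤ a)
    (hf : HasDerivAt f f' x) (hfx : f x ≠ 0) :
    HasDerivAt (fun y => a ^ f y) (Real.log a * f' * a ^ f x) x := by
  rcases ha.eq_or_lt with rfl | ha
  · have hzero : (fun _ => (0 : ℝ)) =ᶠ[nhds x] fun y => (0 : ℝ) ^ f y := by
      filter_upwards [hf.continuousAt.eventually_ne hfx] with y hy
      rw [Real.zero_rpow hy]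
    simpa using (hasDerivAt_const x (0 : ℝ)).congr_of_eventuallyEq hzero.symm
  · exact hf.const_rpow ha

theorem Real.rpow_le_one_add_rpow {a e p : ℝ} (ha : 0 ≤ a) (he : 0 ≤ e) (hep : e ≤ p) :
    a ^ e ≤ 1 + a ^ p := by
  rcases le_or_gt a 1 with h | h
  · linarith [Real.rpow_le_one ha h he, Real.rpow_nonneg ha p]
  · linarith [Real.rpow_le_rpow_of_exponent_le h.le hep]

theorem log_sub_log_sub_log_le_of_forall_rpow_le {A B : ℝ → ℝ} {A' B' k : ℝ} (hk : 0 < k)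
    (hA : HasDerivAt A A' 1) (hB : HasDerivAt B B' 1) (hA0 : ∀ t, 0 < A t)
    (hB0 : ∀ t, 0 < B t) (h1 : B 1 = k * A 1)
    (hle : ∀ t ∈ Set.Ioo (0 : ℝ) 1, B t ^ (t / 2) ≤ k ^ (t / 2) * A t ^ ((2 - t) / 2)) :
    Real.log k - Real.log (A 1) - Real.log (B 1) ≤ B' / B 1 - A' / A 1 := by
  set ψ : ℝ → ℝ := fun t =>
    t / 2 * Real.log (B t) - t / 2 * Real.log k - (2 - t) / 2 * Real.log (A t)
  have hψ1 : ψ 1 = 0 := by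
    simp only [ψ, h1, Real.log_mul hk.ne' (hA0 1).ne']
    ring
  have hψ : ∀ t ∈ Set.Ioo (0 : ℝ) 1, ψ t ≤ ψ 1 := by
    intro t ht
    have hlog := Real.log_le_log (Real.rpow_pos_of_pos (hB0 t) _) (hle t ht)
    rw [Real.log_rpow (hB0 t), Real.log_mul (by positivity) (Real.rpow_pos_of_pos (hA0 t) _).ne',
      Real.log_rpow hk, Real.log_rpow (hA0 t)] at hlog
    simp only [hψ1, ψ]
    linarith
  have hhalf : HasDerivAt (fun t : ℝ => t / 2) (1 / 2) 1 := (hasDerivAt_id 1).div_const 2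
  have hψ' : HasDerivAt ψ
      ((Real.log (B 1) + B' / B 1 - Real.log k + Real.log (A 1) - A' / A 1) / 2) 1 := by
    refine (((hhalf.mul (hB.log (hB0 1).ne')).sub (hhalf.mul_const _)).sub
      ((((hasDerivAt_id 1).const_sub 2).div_const 2).mul (hA.log (hA0 1).ne'))).congr_deriv ?_
    ring
  linarith [hψ'.nonneg_of_forall_mem_Ioo_le zero_lt_one hψ]

theorem Complex.exists_mul_eq_norm_rpow {p q : ℝ} (hp : p ≠ 0) (hq : q ≠ 0)
    (hpq : (q - 1) * p = q) (w : ℂ) : ∃ v : ℂ, w * v = (‖w‖ ^ q : ℝ) ∧ ‖v‖ ^ p = ‖w‖ ^ q := by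
  -- at `w = 0` the witness is `0`, since `x / 0 = 0`
  refine ⟨(‖w‖ ^ q : ℝ) / w, ?_, ?_⟩ <;> rcases eq_or_ne w 0 with rfl | hw
  · simp [Real.zero_rpow hq]
  · exact mul_div_cancel₀ _ hw
  · simp [Real.zero_rpow hp, Real.zero_rpow hq]
  · rw [norm_div, Complex.norm_real, Real.norm_of_nonneg (by positivity),
      ← Real.rpow_sub_one (norm_ne_zero_iff.mpr hw), ← Real.rpow_mul (norm_nonneg w), hpq]

section WeightedSums

variable {n m : ℕ}

theorem wnorm_two_sq {w : Fin n → ℝ} (hw : ∀ i, 0 ≤ w i) (x : Fin n → ℂ) :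
    wnorm w 2 x ^ 2 = ∑ i, w i * ‖x i‖ ^ 2 := by
  have hsum : 0 ≤ ∑ i, w i * ‖x i‖ ^ (2 : ℝ) :=
    sum_nonneg fun i _ => mul_nonneg (hw i) (Real.rpow_nonneg (norm_nonneg _) _)
  rw [wnorm, ← Real.rpow_natCast, ← Real.rpow_mul hsum]
  norm_num

theorem sum_mul_rpow_pos {w : Fin n → ℝ} (hw : ∀ i, 0 < w i) {x : Fin n → ℂ} (hx : x ≠ 0)
    (s : ℝ) : 0 < ∑ i, w i * ‖x i‖ ^ s := by
  obtain ⟨i, hi⟩ := Function.ne_iff.mp hx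
  exact sum_pos' (fun j _ => mul_nonneg (hw j).le (Real.rpow_nonneg (norm_nonneg _) s))
    ⟨i, mem_univ i, mul_pos (hw i) (Real.rpow_pos_of_pos (norm_pos_iff.mpr hi) s)⟩

theorem hasDerivAt_sum_mul_rpow (w : Fin n → ℝ) (x : Fin n → ℂ) {g : ℝ → ℝ} {g' t : ℝ}
    (hg : HasDerivAt g g' t) (hgt : g t = 2) :
    HasDerivAt (fun s => ∑ i, w i * ‖x i‖ ^ g s) (-(g' / 2) * went w x) t := by
  have hterm := fun i => ((hg.const_rpow_of_nonneg (norm_nonneg (x i))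
    (by rw [hgt]; norm_num)).const_mul (w i))
  refine (HasDerivAt.fun_sum fun i _ => hterm i).congr_deriv ?_
  rw [hgt, went, neg_mul_neg, mul_sum]
  refine sum_congr rfl fun i _ => ?_
  rw [Real.rpow_two, Real.log_pow]
  push_cast
  ring

theorem norm_sum_mul_le {τ : Fin m → ℝ} (hτ : ∀ j, 0 ≤ τ j) (u v : Fin m → ℂ) :
    ‖∑ j, (τ j : ℂ) * u j * v j‖ ≤ ∑ j, τ j * (‖u j‖ * ‖v j‖) := by
  refine (norm_sum_le _ _).trans_eq (sum_congr rfl fun j _ => ?_)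
  rw [norm_mul, norm_mul, Complex.norm_real, Real.norm_of_nonneg (hτ j), mul_assoc]

variable {d : Fin n → ℝ} {τ : Fin m → ℝ} {k : ℝ} {F : (Fin n → ℂ) →ₗ[ℂ] (Fin m → ℂ)}

theorem IsAdjointPair.sum_mul_norm_sq_eq {G : (Fin m → ℂ) →ₗ[ℂ] (Fin n → ℂ)}
    (hadj : IsAdjointPair d τ F G) (hiso : ∀ y, G (F y) = (k : ℂ) • y) (u : Fin n → ℂ) :
    ∑ j, τ j * ‖F u j‖ ^ 2 = k * ∑ i, d i * ‖u i‖ ^ 2 := by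
  have h := hadj u (F u)
  simp only [hiso, Pi.smul_apply, smul_eq_mul, mul_assoc, Complex.conj_mul',
    mul_left_comm _ (k : ℂ), ← mul_sum] at h
  exact_mod_cast h

theorem norm_apply_le_of_inorm_le (hF : ∀ x, inorm (F x) ≤ wnorm d 1 x) (u : Fin n → ℂ)
    (j : Fin m) : ‖F u j‖ ≤ ∑ i, d i * ‖u i‖ := by
  have hj : ‖F u j‖ ≤ inorm (F u) :=
    le_ciSup (f := fun j => ‖F u j‖) (Set.finite_range _).bddAbove j
  simpa [wnorm] using hj.trans (hF u)

end WeightedSums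

/-- `w |w|^(p (1 - z/2) - 1)`, of modulus `|w|^(p (1 - re z/2))`: this is `|w|^p` on `re z = 0`,
`|w|^(p/2)` on `re z = 1`, and the value is `w` itself where `p (1 - z/2) = 1`. -/
noncomputable def stripPow (p : ℝ) (w z : ℂ) : ℂ :=
  w * Complex.exp ((p * (1 - z / 2) - 1) * Real.log ‖w‖)

theorem differentiable_stripPow (p : ℝ) (w : ℂ) : Differentiable ℂ (stripPow p w) := by
  unfold stripPow
  fun_prop

theorem norm_stripPow {p : ℝ} (w : ℂ) {z : ℂ} (hz : p * (1 - z.re / 2) ≠ 0) :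
    ‖stripPow p w z‖ = ‖w‖ ^ (p * (1 - z.re / 2)) := by
  rcases eq_or_ne w 0 with rfl | hw
  · simp [stripPow, Real.zero_rpow hz]
  have hre : ((p * (1 - z / 2) - 1) * (Real.log ‖w‖ : ℂ)).re
      = (p * (1 - z.re / 2) - 1) * Real.log ‖w‖ := by
    simp [Complex.mul_re]
  rw [stripPow, norm_mul, Complex.norm_exp, hre, Real.rpow_def_of_pos (norm_pos_iff.mpr hw)]
  nth_rw 1 [← Real.exp_log (norm_pos_iff.mpr hw)]
  rw [← Real.exp_add]
  ring_nf

theorem stripPow_ofReal_of_mul_eq_one {p θ : ℝ} (h : p * (1 - θ / 2) = 1) (w : ℂ) :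
    stripPow p w θ = w := by
  have h' : (p : ℂ) * (1 - θ / 2) - 1 = 0 := by exact_mod_cast sub_eq_zero.mpr h
  simp [stripPow, h']

section Interpolation

variable {n m : ℕ} {d : Fin n → ℝ} {τ : Fin m → ℝ} {k : ℝ} {F : (Fin n → ℂ) →ₗ[ℂ] (Fin m → ℂ)}

noncomputable def threeLinesFun (τ : Fin m → ℝ) (F : (Fin n → ℂ) →ₗ[ℂ] (Fin m → ℂ)) (p : ℝ)
    (x : Fin n → ℂ) (y : Fin m → ℂ) (z : ℂ) : ℂ :=
  ∑ j, (τ j : ℂ) * F (fun i => stripPow p (x i) z) j * stripPow p (y j) z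

theorem differentiable_threeLinesFun (p : ℝ) (x : Fin n → ℂ) (y : Fin m → ℂ) :
    Differentiable ℂ (threeLinesFun τ F p x y) := by
  have hFX : ∀ j, Differentiable ℂ fun z => F (fun i => stripPow p (x i) z) j :=
    differentiable_pi.mp ((LinearMap.toContinuousLinearMap F).differentiable.comp
      (differentiable_pi.mpr fun i => differentiable_stripPow p (x i)))
  exact Differentiable.fun_sum fun j _ =>
    ((differentiable_const _).mul (hFX j)).mul (differentiable_stripPow p (y j))

theorem threeLinesFun_ofReal {p θ : ℝ} (h : p * (1 - θ / 2) = 1) (x : Fin n → ℂ)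
    (y : Fin m → ℂ) : threeLinesFun τ F p x y θ = ∑ j, (τ j : ℂ) * F x j * y j := by
  simp only [threeLinesFun, stripPow_ofReal_of_mul_eq_one h]

theorem norm_threeLinesFun_le_of_re_eq_zero (hτ : ∀ j, 0 ≤ τ j)
    (hF1 : ∀ u j, ‖F u j‖ ≤ ∑ i, d i * ‖u i‖) {p : ℝ} (hp : 0 < p) (x : Fin n → ℂ)
    (y : Fin m → ℂ) {z : ℂ} (hz : z.re = 0) :
    ‖threeLinesFun τ F p x y z‖ ≤ (∑ i, d i * ‖x i‖ ^ p) * ∑ j, τ j * ‖y j‖ ^ p := by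
  have hexp : p * (1 - z.re / 2) = p := by rw [hz]; ring
  have hnorm : ∀ w, ‖stripPow p w z‖ = ‖w‖ ^ p := fun w => by
    rw [norm_stripPow w (by rw [hexp]; exact hp.ne'), hexp]
  have hFX : ∀ j, ‖F (fun i => stripPow p (x i) z) j‖ ≤ ∑ i, d i * ‖x i‖ ^ p := fun j => by
    simpa only [hnorm] using hF1 (fun i => stripPow p (x i) z) j
  calc ‖threeLinesFun τ F p x y z‖
      ≤ ∑ j, τ j * (‖F (fun i => stripPow p (x i) z) j‖ * ‖stripPow p (y j) z‖) :=
        norm_sum_mul_le hτ _ _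
    _ ≤ ∑ j, τ j * ((∑ i, d i * ‖x i‖ ^ p) * ‖y j‖ ^ p) := by
        refine sum_le_sum fun j _ => mul_le_mul_of_nonneg_left ?_ (hτ j)
        rw [hnorm]
        exact mul_le_mul_of_nonneg_right (hFX j) (by positivity)
    _ = (∑ i, d i * ‖x i‖ ^ p) * ∑ j, τ j * ‖y j‖ ^ p := by
        rw [mul_sum]
        exact sum_congr rfl fun j _ => by ring

theorem norm_threeLinesFun_le_of_re_eq_one (hτ : ∀ j, 0 ≤ τ j)
    (hF2 : ∀ u, ∑ j, τ j * ‖F u j‖ ^ 2 ≤ k * ∑ i, d i * ‖u i‖ ^ 2) {p : ℝ} (hp : 0 < p)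
    (x : Fin n → ℂ) (y : Fin m → ℂ) {z : ℂ} (hz : z.re = 1) :
    ‖threeLinesFun τ F p x y z‖ ≤
      √(k * (∑ i, d i * ‖x i‖ ^ p) * ∑ j, τ j * ‖y j‖ ^ p) := by
  have hexp : p * (1 - z.re / 2) = p / 2 := by rw [hz]; ring
  have hnorm : ∀ w, ‖stripPow p w z‖ ^ 2 = ‖w‖ ^ p := fun w => by
    rw [norm_stripPow w (by rw [hexp]; positivity), hexp, ← Real.rpow_natCast,
      ← Real.rpow_mul (norm_nonneg w)]
    norm_num
  set X : Fin n → ℂ := fun i => stripPow p (x i) z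
  set Y : Fin m → ℂ := fun j => stripPow p (y j) z
  have hCS : (∑ j, τ j * (‖F X j‖ * ‖Y j‖)) ^ 2 ≤
      (∑ j, τ j * ‖F X j‖ ^ 2) * ∑ j, τ j * ‖Y j‖ ^ 2 :=
    sum_sq_le_sum_mul_sum_of_sq_le_mul _
      (fun j _ => mul_nonneg (hτ j) (sq_nonneg _)) (fun j _ => mul_nonneg (hτ j) (sq_nonneg _))
      fun j _ => le_of_eq (by ring)
  have hFX := hF2 X
  simp only [X, Y, hnorm] at hCS hFX
  refine (norm_sum_mul_le hτ _ _).trans (Real.le_sqrt_of_sq_le (hCS.trans ?_))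
  exact mul_le_mul_of_nonneg_right hFX
    (sum_nonneg fun j _ => mul_nonneg (hτ j) (Real.rpow_nonneg (norm_nonneg _) _))

theorem bddAbove_norm_threeLinesFun (hd : ∀ i, 0 ≤ d i) (hτ : ∀ j, 0 ≤ τ j)
    (hF1 : ∀ u j, ‖F u j‖ ≤ ∑ i, d i * ‖u i‖) {p : ℝ} (hp : 0 < p) (x : Fin n → ℂ)
    (y : Fin m → ℂ) :
    BddAbove ((norm ∘ threeLinesFun τ F p x y) '' verticalClosedStrip 0 1) := by
  refine ⟨∑ j, τ j * ((∑ i, d i * (1 + ‖x i‖ ^ p)) * (1 + ‖y j‖ ^ p)), ?_⟩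
  rintro _ ⟨z, ⟨hz0, hz1⟩, rfl⟩
  have hexp : 0 < p * (1 - z.re / 2) := mul_pos hp (by linarith)
  have hnorm : ∀ w, ‖stripPow p w z‖ ≤ 1 + ‖w‖ ^ p := fun w => by
    rw [norm_stripPow w hexp.ne']
    exact Real.rpow_le_one_add_rpow (norm_nonneg w) hexp.le (by nlinarith)
  refine (norm_sum_mul_le hτ _ _).trans (sum_le_sum fun j _ => ?_)
  refine mul_le_mul_of_nonneg_left (mul_le_mul ?_ (hnorm _) (norm_nonneg _) ?_) (hτ j)
  · exact (hF1 _ j).trans (sum_le_sum fun i _ => mul_le_mul_of_nonneg_left (hnorm _) (hd i))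
  · exact sum_nonneg fun i _ => mul_nonneg (hd i) (by positivity)

theorem norm_sum_mul_le_wnorm_mul_wnorm (hd : ∀ i, 0 ≤ d i) (hτ : ∀ j, 0 ≤ τ j) (hk : 0 ≤ k)
    (hF1 : ∀ u j, ‖F u j‖ ≤ ∑ i, d i * ‖u i‖)
    (hF2 : ∀ u, ∑ j, τ j * ‖F u j‖ ^ 2 ≤ k * ∑ i, d i * ‖u i‖ ^ 2)
    {θ : ℝ} (hθ0 : 0 ≤ θ) (hθ1 : θ ≤ 1) (x : Fin n → ℂ) (y : Fin m → ℂ) :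
    ‖∑ j, (τ j : ℂ) * F x j * y j‖ ≤
      k ^ (θ / 2) * wnorm d (2 / (2 - θ)) x * wnorm τ (2 / (2 - θ)) y := by
  set p := 2 / (2 - θ)
  have hp : 0 < p := div_pos two_pos (by linarith)
  have h1p : 1 / p = (1 - θ) + θ / 2 := by
    rw [one_div_div]
    ring
  have hpθ : p * (1 - θ / 2) = 1 := by
    rw [div_mul_eq_mul_div, div_eq_one_iff_eq (by linarith)]
    ring
  have hA : 0 ≤ ∑ i, d i * ‖x i‖ ^ p :=
    sum_nonneg fun i _ => mul_nonneg (hd i) (Real.rpow_nonneg (norm_nonneg _) _)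
  have hB : 0 ≤ ∑ j, τ j * ‖y j‖ ^ p :=
    sum_nonneg fun j _ => mul_nonneg (hτ j) (Real.rpow_nonneg (norm_nonneg _) _)
  have h := norm_le_interp_of_mem_verticalClosedStrip₀₁' (threeLinesFun τ F p x y) (z := θ)
    (by simp [verticalClosedStrip, hθ0, hθ1]) (differentiable_threeLinesFun p x y).diffContOnCl
    (bddAbove_norm_threeLinesFun hd hτ hF1 hp x y)
    (fun z hz => norm_threeLinesFun_le_of_re_eq_zero hτ hF1 hp x y hz)
    (fun z hz => norm_threeLinesFun_le_of_re_eq_one hτ hF2 hp x y hz)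
  rw [threeLinesFun_ofReal hpθ, Complex.ofReal_re] at h
  refine h.trans_eq ?_
  rw [wnorm, wnorm, mul_assoc (k ^ (θ / 2)), ← Real.mul_rpow hA hB, h1p,
    Real.rpow_add' (mul_nonneg hA hB) (by linarith), mul_assoc k, Real.sqrt_eq_rpow,
    ← Real.rpow_mul (mul_nonneg hk (mul_nonneg hA hB)), Real.mul_rpow hk (mul_nonneg hA hB)]
  ring_nf

theorem wnorm_apply_le_rpow_mul_wnorm (hd : ∀ i, 0 ≤ d i) (hτ : ∀ j, 0 ≤ τ j) (hk : 0 ≤ k)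
    (hF1 : ∀ u j, ‖F u j‖ ≤ ∑ i, d i * ‖u i‖)
    (hF2 : ∀ u, ∑ j, τ j * ‖F u j‖ ^ 2 ≤ k * ∑ i, d i * ‖u i‖ ^ 2)
    {θ : ℝ} (hθ0 : 0 < θ) (hθ1 : θ ≤ 1) (x : Fin n → ℂ) :
    wnorm τ (2 / θ) (F x) ≤ k ^ (θ / 2) * wnorm d (2 / (2 - θ)) x := by
  obtain ⟨q, hq⟩ : ∃ q, q = 2 / θ := ⟨_, rfl⟩
  obtain ⟨p, hp⟩ : ∃ p, p = 2 / (2 - θ) := ⟨_, rfl⟩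
  have h2θ : 2 - θ ≠ 0 := by linarith
  have hpq : (q - 1) * p = q := by
    rw [hq, hp]
    field_simp
  have hpq' : 1 / q + 1 / p = 1 := by
    rw [hq, hp, one_div_div, one_div_div]
    ring
  -- pairing `F x` with `y` realizes the dual norm: `∑ τ (F x) y = ‖F x‖_q^q = ‖y‖_p^p`
  choose y hfy hy using fun j => Complex.exists_mul_eq_norm_rpow
    (by rw [hp]; exact div_ne_zero two_ne_zero h2θ) (by rw [hq]; positivity) hpq (F x j)
  have h := norm_sum_mul_le_wnorm_mul_wnorm hd hτ hk hF1 hF2 hθ0.le hθ1 x y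
  rw [← hq, ← hp]
  rw [← hp] at h
  simp only [wnorm, hy] at h ⊢
  set S := ∑ j, τ j * ‖F x j‖ ^ q
  have hS : 0 ≤ S := sum_nonneg fun j _ => mul_nonneg (hτ j) (Real.rpow_nonneg (norm_nonneg _) _)
  have hsum : ∑ j, (τ j : ℂ) * F x j * y j = S := by
    simp only [S, mul_assoc, hfy, Complex.ofReal_sum, Complex.ofReal_mul]
  rw [hsum, Complex.norm_real, Real.norm_of_nonneg hS] at h
  rcases hS.eq_or_lt with h0 | hSpos
  · rw [← h0, Real.zero_rpow (by rw [hq]; positivity)]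
    exact mul_nonneg (Real.rpow_nonneg hk _) (Real.rpow_nonneg (sum_nonneg fun i _ =>
      mul_nonneg (hd i) (Real.rpow_nonneg (norm_nonneg _) _)) _)
  · refine le_of_mul_le_mul_right ?_ (Real.rpow_pos_of_pos hSpos (1 / p))
    rwa [← Real.rpow_add hSpos, hpq', Real.rpow_one]

end Interpolation

theorem quantum_hirschman_beckner_general {n m : ℕ}
    (d : Fin n → ℝ) (τ : Fin m → ℝ) (hd : ∀ i, 0 < d i) (hτ : ∀ j, 0 < τ j)
    (k : ℝ) (hk : 0 < k)
    (F : (Fin n → ℂ) →ₗ[ℂ] (Fin m → ℂ)) (G : (Fin m → ℂ) →ₗ[ℂ] (Fin n → ℂ))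
    (hadj : IsAdjointPair d τ F G)
    (hF1 : ∀ x, inorm (F x) ≤ wnorm d 1 x)
    (hiso : ∀ y, G (F y) = (k : ℂ) • y)
    (x : Fin n → ℂ) (hx : x ≠ 0) :
    went d x / (wnorm d 2 x) ^ 2 + went τ (F x) / (wnorm τ 2 (F x)) ^ 2 ≥
      -Real.log ((wnorm d 2 x) ^ 2) - Real.log ((wnorm τ 2 (F x)) ^ 2) + Real.log k := by
  have hparseval := hadj.sum_mul_norm_sq_eq hiso
  have hFx : F x ≠ 0 := fun h => hx <| by simpa [h, hk.ne'] using (hiso x).symm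
  have hHY : ∀ t ∈ Set.Ioo (0 : ℝ) 1,
      wnorm τ (2 / t) (F x) ≤ k ^ (t / 2) * wnorm d (2 / (2 - t)) x := fun t ht =>
    wnorm_apply_le_rpow_mul_wnorm (fun i => (hd i).le) (fun j => (hτ j).le) hk.le
      (norm_apply_le_of_inorm_le hF1) (fun u => (hparseval u).le) ht.1 ht.2.le x
  have hA : HasDerivAt (fun t : ℝ => 2 / (2 - t)) 2 1 :=
    ((hasDerivAt_const (1 : ℝ) (2 : ℝ)).fun_div ((hasDerivAt_id' 1).const_sub 2)
      (by norm_num)).congr_deriv (by norm_num)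
  have hB : HasDerivAt (fun t : ℝ => 2 / t) (-2) 1 :=
    ((hasDerivAt_const (1 : ℝ) (2 : ℝ)).fun_div (hasDerivAt_id' 1) (by norm_num)).congr_deriv
      (by norm_num)
  have key := log_sub_log_sub_log_le_of_forall_rpow_le
    (A := fun t => ∑ i, d i * ‖x i‖ ^ (2 / (2 - t))) (B := fun t => ∑ j, τ j * ‖F x j‖ ^ (2 / t))
    hk (hasDerivAt_sum_mul_rpow d x hA (by norm_num))
    (hasDerivAt_sum_mul_rpow τ (F x) hB (by norm_num))
    (fun t => sum_mul_rpow_pos hd hx _) (fun t => sum_mul_rpow_pos hτ hFx _)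
    (by norm_num [hparseval x]) (fun t ht => by simpa [wnorm, one_div_div] using hHY t ht)
  rw [wnorm_two_sq (fun i => (hd i).le), wnorm_two_sq (fun j => (hτ j).le)]
  norm_num [neg_div] at key
  linarith

/-- Quantum Hirschman-Beckner uncertainty principle,
commutative finite-dimensional case. -/
theorem quantum_hirschman_beckner {n m : ℕ} (hn : 0 < n) (hm : 0 < m)
    (d : Fin n → ℝ) (τ : Fin m → ℝ) (hd : ∀ i, 0 < d i) (hτ : ∀ j, 0 < τ j)
    (k : ℝ) (hk : 0 < k)
    (F : (Fin n → ℂ) →ₗ[ℂ] (Fin m → ℂ)) (G : (Fin m → ℂ) →ₗ[ℂ] (Fin n → ℂ))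
    (hadj : IsAdjointPair d τ F G)
    (hF1 : ∀ x, inorm (F x) ≤ wnorm d 1 x)
    (hFk : ∀ x, k * inorm x ≤ inorm (G (F x)))
    (hiso : ∀ y, G (F y) = (k : ℂ) • y)
    (x : Fin n → ℂ) (hx : x ≠ 0) :
    went d x / (wnorm d 2 x) ^ 2 + went τ (F x) / (wnorm τ 2 (F x)) ^ 2 ≥
      -Real.log ((wnorm d 2 x) ^ 2) - Real.log ((wnorm τ 2 (F x)) ^ 2) + Real.log k :=
  quantum_hirschman_beckner_general d τ hd hτ k hk F G hadj hF1 hiso x hx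
end
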